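/- arXiv:2211.14913 — 2 statements merged into one kernel-verified Lean document; each statement's English description precedes it below -/
import Mathlib

section
/- Let φ over Σ = C ∪ U be either a safetyLTL formula (a pure-future NNF formula whose only temporal operators are wX and R) or a formula of the form G α with α pure past. Then φ is realizable over finite traces if and only if there exists a strategy s : (2^U)^+ → 2^C such that for every 𝒰 ∈ (2^U)^ω, the length-1 trace consisting of the first state res(s,𝒰)_0 of res(s,𝒰) is a model of φ. -/
/-- LTL+P formulas in negation normal form. -/
inductive LTLP (A : Type) : Type where
  | atom : A → LTLP A
  | natom : A → LTLP A
  | and : LTLP A → LTLP A → LTLP A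
  | or : LTLP A → LTLP A → LTLP A
  | next : LTLP A → LTLP A            -- X
  | wnext : LTLP A → LTLP A           -- wX
  | until_ : LTLP A → LTLP A → LTLP A -- U
  | release : LTLP A → LTLP A → LTLP A -- R
  | yest : LTLP A → LTLP A            -- Y
  | wyest : LTLP A → LTLP A           -- wY
  | since : LTLP A → LTLP A → LTLP A  -- S
  | trig : LTLP A → LTLP A → LTLP A   -- T

variable {A : Type}

/-- Satisfaction of an LTL+P formula at position `i` of a finite trace `σ`. -/
def finSat (σ : List (Set A)) : LTLP A → ℕ → Prop
  | .atom p, i => p ∈ σ.getD i ∅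
  | .natom p, i => p ∉ σ.getD i ∅
  | .and φ ψ, i => finSat σ φ i ∧ finSat σ ψ i
  | .or φ ψ, i => finSat σ φ i ∨ finSat σ ψ i
  | .next φ, i => i + 1 < σ.length ∧ finSat σ φ (i+1)
  | .wnext φ, i => i + 1 = σ.length ∨ finSat σ φ (i+1)
  | .until_ φ ψ, i => ∃ j, i ≤ j ∧ j < σ.length ∧ finSat σ ψ j ∧
      ∀ k, i ≤ k → k < j → finSat σ φ k
  | .release φ ψ, i => (∀ j, i ≤ j → j < σ.length → finSat σ ψ j) ∨
      ∃ k, i ≤ k ∧ k < σ.length ∧ finSat σ φ k ∧ ∀ j, i ≤ j → j ≤ k → finSat σ ψ j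
  | .yest φ, i => 0 < i ∧ finSat σ φ (i-1)
  | .wyest φ, i => i = 0 ∨ finSat σ φ (i-1)
  | .since φ ψ, i => ∃ j, j ≤ i ∧ finSat σ ψ j ∧ ∀ k, j < k → k ≤ i → finSat σ φ k
  | .trig φ ψ, i => (∀ j, j ≤ i → finSat σ ψ j) ∨
      ∃ k, k ≤ i ∧ finSat σ φ k ∧ ∀ j, k ≤ j → j ≤ i → finSat σ ψ j

/-- Satisfaction of an LTL+P formula at position `i` of an infinite trace `σ`. -/
def infSat (σ : ℕ → Set A) : LTLP A → ℕ → Prop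
  | .atom p, i => p ∈ σ i
  | .natom p, i => p ∉ σ i
  | .and φ ψ, i => infSat σ φ i ∧ infSat σ ψ i
  | .or φ ψ, i => infSat σ φ i ∨ infSat σ ψ i
  | .next φ, i => infSat σ φ (i+1)
  | .wnext φ, i => infSat σ φ (i+1)
  | .until_ φ ψ, i => ∃ j, i ≤ j ∧ infSat σ ψ j ∧ ∀ k, i ≤ k → k < j → infSat σ φ k
  | .release φ ψ, i => (∀ j, i ≤ j → infSat σ ψ j) ∨
      ∃ k, i ≤ k ∧ infSat σ φ k ∧ ∀ j, i ≤ j → j ≤ k → infSat σ ψ j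
  | .yest φ, i => 0 < i ∧ infSat σ φ (i-1)
  | .wyest φ, i => i = 0 ∨ infSat σ φ (i-1)
  | .since φ ψ, i => ∃ j, j ≤ i ∧ infSat σ ψ j ∧ ∀ k, j < k → k ≤ i → infSat σ φ k
  | .trig φ ψ, i => (∀ j, j ≤ i → infSat σ ψ j) ∨
      ∃ k, k ≤ i ∧ infSat σ φ k ∧ ∀ j, k ≤ j → j ≤ i → infSat σ ψ j

/-- Pure-future formulas: no past operators. -/
def pureFuture : LTLP A → Prop
  | .atom _ | .natom _ => True
  | .and φ ψ | .or φ ψ | .until_ φ ψ | .release φ ψ => pureFuture φ ∧ pureFuture ψ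
  | .next φ | .wnext φ => pureFuture φ
  | .yest _ | .wyest _ | .since _ _ | .trig _ _ => False

/-- Pure-past formulas: no future operators. -/
def purePast : LTLP A → Prop
  | .atom _ | .natom _ => True
  | .and φ ψ | .or φ ψ | .since φ ψ | .trig φ ψ => purePast φ ∧ purePast ψ
  | .yest φ | .wyest φ => purePast φ
  | .next _ | .wnext _ | .until_ _ _ | .release _ _ => False

/-- safetyLTL: pure-future NNF formulas whose only temporal operators are wX and R. -/
def isSafetyLTL : LTLP A → Prop
  | .atom _ | .natom _ => True
  | .and φ ψ | .or φ ψ | .release φ ψ => isSafetyLTL φ ∧ isSafetyLTL ψ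
  | .wnext φ => isSafetyLTL φ
  | .next _ | .until_ _ _ | .yest _ | .wyest _ | .since _ _ | .trig _ _ => False

/-- cosafetyLTL: pure-future NNF formulas whose only temporal operators are X and U. -/
def isCosafetyLTL : LTLP A → Prop
  | .atom _ | .natom _ => True
  | .and φ ψ | .or φ ψ | .until_ φ ψ => isCosafetyLTL φ ∧ isCosafetyLTL ψ
  | .next φ => isCosafetyLTL φ
  | .wnext _ | .release _ _ | .yest _ | .wyest _ | .since _ _ | .trig _ _ => False

/-- ⊥ := p ∧ ¬p (for some proposition letter p). -/
def LTLP.fls (p : A) : LTLP A := .and (.atom p) (.natom p)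
/-- ⊤ := p ∨ ¬p (for some proposition letter p). -/
def LTLP.tru (p : A) : LTLP A := .or (.atom p) (.natom p)
/-- G φ := ⊥ R φ. -/
def LTLP.G (p : A) (φ : LTLP A) : LTLP A := .release (LTLP.fls p) φ
/-- F φ := ⊤ U φ. -/
def LTLP.F (p : A) (φ : LTLP A) : LTLP A := .until_ (LTLP.tru p) φ

/-- Relabelling of proposition letters. -/
def LTLP.map {A B : Type} (h : A → B) : LTLP A → LTLP B
  | .atom p => .atom (h p)
  | .natom p => .natom (h p)
  | .and φ ψ => .and (φ.map h) (ψ.map h)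
  | .or φ ψ => .or (φ.map h) (ψ.map h)
  | .next φ => .next (φ.map h)
  | .wnext φ => .wnext (φ.map h)
  | .until_ φ ψ => .until_ (φ.map h) (ψ.map h)
  | .release φ ψ => .release (φ.map h) (ψ.map h)
  | .yest φ => .yest (φ.map h)
  | .wyest φ => .wyest (φ.map h)
  | .since φ ψ => .since (φ.map h) (ψ.map h)
  | .trig φ ψ => .trig (φ.map h) (ψ.map h)

/-- The translation f over the alphabet extended with the fresh letter `endt`
(encoded as `none`, with letters of Σ encoded as `some p`). -/
def ftr : LTLP A → LTLP (Option A)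
  | .atom p => .atom (some p)
  | .natom p => .natom (some p)
  | .and φ ψ => .and (ftr φ) (ftr ψ)
  | .or φ ψ => .or (ftr φ) (ftr ψ)
  | .next φ => .next (.and (.natom none) (ftr φ))
  | .wnext φ => .next (.or (.atom none) (ftr φ))  -- X(¬endt → f φ)
  | .until_ φ ψ => .until_ (ftr φ) (.and (.natom none) (ftr ψ))
  | .release φ ψ => .or (.until_ (ftr ψ) (.and (ftr ψ) (.next (.atom none))))
      (.until_ (ftr ψ) (.and (ftr φ) (ftr ψ)))
  | .yest φ => .yest (ftr φ)
  | .wyest φ => .wyest (ftr φ)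
  | .since φ ψ => .since (ftr φ) (ftr ψ)
  | .trig φ ψ => .trig (ftr φ) (ftr ψ)

/-- g(φ) := ¬endt ∧ f(φ) ∧ ((¬endt) U endt). -/
def gtr (φ : LTLP A) : LTLP (Option A) :=
  .and (.natom none) (.and (ftr φ) (.until_ (.natom none) (.atom none)))

/-- The outcome trace res(s,𝒰) of a (Mealy, Environment-first) strategy. -/
def resTr {C U : Type} (s : List (Set U) → Set C) (env : ℕ → Set U) : ℕ → Set (C ⊕ U) :=
  fun i => Sum.elim (fun c => c ∈ s ((List.range (i+1)).map env)) (fun u => u ∈ env i)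

/-- Realizability over infinite traces. -/
def RealizableInf {C U : Type} (φ : LTLP (C ⊕ U)) : Prop :=
  ∃ s : List (Set U) → Set C, ∀ env : ℕ → Set U, infSat (resTr s env) φ 0

/-- Realizability over finite traces. -/
def RealizableFin {C U : Type} (φ : LTLP (C ⊕ U)) : Prop :=
  ∃ s : List (Set U) → Set C, ∀ env : ℕ → Set U, ∃ k : ℕ,
    finSat ((List.range (k+1)).map (resTr s env)) φ 0

lemma getD_take_eq (σ : List (Set A)) (n i : ℕ) (h : i < n) :
    (σ.take n).getD i ∅ = σ.getD i ∅ := by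
  simp [List.getD_eq_getElem?_getD, List.getElem?_take, h]

lemma safety_take : ∀ (φ : LTLP A), isSafetyLTL φ → ∀ (σ : List (Set A)) (n i : ℕ),
    n ≤ σ.length → i < n → finSat σ φ i → finSat (σ.take n) φ i := by
  intro φ
  induction φ with
  | atom p =>
    intro _ σ n i hn hi h
    show p ∈ (σ.take n).getD i ∅
    rw [getD_take_eq σ n i hi]; exact h
  | natom p =>
    intro _ σ n i hn hi h
    show p ∉ (σ.take n).getD i ∅
    rw [getD_take_eq σ n i hi]; exact h
  | and φ ψ ihφ ihψ =>
    intro hs σ n i hn hi h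
    exact ⟨ihφ hs.1 σ n i hn hi h.1, ihψ hs.2 σ n i hn hi h.2⟩
  | or φ ψ ihφ ihψ =>
    intro hs σ n i hn hi h
    exact h.imp (ihφ hs.1 σ n i hn hi) (ihψ hs.2 σ n i hn hi)
  | wnext φ ih =>
    intro hs σ n i hn hi h
    have hlen : (σ.take n).length = n := by simp [Nat.min_eq_left hn]
    rcases h with h | h
    · left; omega
    · by_cases hin : i + 1 = n
      · left; omega
      · right; exact ih hs σ n (i+1) hn (by omega) h
  | release φ ψ ihφ ihψ =>
    intro hs σ n i hn hi h
    have hlen : (σ.take n).length = n := by simp [Nat.min_eq_left hn]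
    rcases h with h | ⟨k, hik, hk, hφk, hψj⟩
    · left; intro j hij hj
      rw [hlen] at hj
      exact ihψ hs.2 σ n j hn hj (h j hij (by omega))
    · by_cases hkn : k < n
      · right
        exact ⟨k, hik, by omega, ihφ hs.1 σ n k hn hkn hφk,
          fun j hij hjk => ihψ hs.2 σ n j hn (by omega) (hψj j hij hjk)⟩
      · left; intro j hij hj
        rw [hlen] at hj
        exact ihψ hs.2 σ n j hn hj (hψj j hij (by omega))
  | next φ ih => intro hs; exact absurd hs not_false
  | until_ φ ψ _ _ => intro hs; exact absurd hs not_false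
  | yest φ _ => intro hs; exact absurd hs not_false
  | wyest φ _ => intro hs; exact absurd hs not_false
  | since φ ψ _ _ => intro hs; exact absurd hs not_false
  | trig φ ψ _ _ => intro hs; exact absurd hs not_false

lemma purePast_congr : ∀ (α : LTLP A), purePast α → ∀ (σ τ : List (Set A)) (i : ℕ),
    (∀ j, j ≤ i → σ.getD j ∅ = τ.getD j ∅) → finSat σ α i → finSat τ α i := by
  intro α
  induction α with
  | atom p => intro _ σ τ i hag h; rwa [finSat, ← hag i le_rfl]
  | natom p => intro _ σ τ i hag h; rwa [finSat, ← hag i le_rfl]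
  | and φ ψ ihφ ihψ =>
    intro hp σ τ i hag h
    exact ⟨ihφ hp.1 σ τ i hag h.1, ihψ hp.2 σ τ i hag h.2⟩
  | or φ ψ ihφ ihψ =>
    intro hp σ τ i hag h
    exact h.imp (ihφ hp.1 σ τ i hag) (ihψ hp.2 σ τ i hag)
  | yest φ ih =>
    intro hp σ τ i hag h
    exact ⟨h.1, ih hp σ τ (i-1) (fun j hj => hag j (by omega)) h.2⟩
  | wyest φ ih =>
    intro hp σ τ i hag h
    exact h.imp id (ih hp σ τ (i-1) (fun j hj => hag j (by omega)))
  | since φ ψ ihφ ihψ =>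
    intro hp σ τ i hag ⟨j, hji, hψj, hφk⟩
    exact ⟨j, hji, ihψ hp.2 σ τ j (fun m hm => hag m (by omega)) hψj,
      fun k hjk hki => ihφ hp.1 σ τ k (fun m hm => hag m (by omega)) (hφk k hjk hki)⟩
  | trig φ ψ ihφ ihψ =>
    intro hp σ τ i hag h
    rcases h with h | ⟨k, hki, hφk, hψj⟩
    · left; intro j hj
      exact ihψ hp.2 σ τ j (fun m hm => hag m (by omega)) (h j hj)
    · right
      exact ⟨k, hki, ihφ hp.1 σ τ k (fun m hm => hag m (by omega)) hφk,
        fun j hkj hji => ihψ hp.2 σ τ j (fun m hm => hag m (by omega)) (hψj j hkj hji)⟩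
  | next φ _ => intro hp; exact absurd hp not_false
  | wnext φ _ => intro hp; exact absurd hp not_false
  | until_ φ ψ _ _ => intro hp; exact absurd hp not_false
  | release φ ψ _ _ => intro hp; exact absurd hp not_false

/-- A safetyLTL formula, or `G α` with `α` pure past, over `Σ = C ∪ U`, is
realizable over finite traces iff some strategy wins with the length-1 prefix
of the outcome. -/
theorem stmt13 {C U : Type} [Fintype C] [Fintype U] (φ : LTLP (C ⊕ U))
    (hφ : isSafetyLTL φ ∨
      ∃ (p : C ⊕ U) (α : LTLP (C ⊕ U)), purePast α ∧ φ = LTLP.G p α) :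
    RealizableFin φ ↔
      ∃ s : List (Set U) → Set C, ∀ env : ℕ → Set U,
        finSat [resTr s env 0] φ 0 := by
  constructor
  · rintro ⟨s, hs⟩
    refine ⟨s, fun env => ?_⟩
    obtain ⟨k, hk⟩ := hs env
    set σ : List (Set (C ⊕ U)) := (List.range (k+1)).map (resTr s env) with hσ
    have hlen : σ.length = k + 1 := by simp [hσ]
    have htake : σ.take 1 = [resTr s env 0] := by
      simp [hσ, ← List.map_take, List.take_range, show List.range 1 = [0] from rfl]
    have hget0 : σ.getD 0 ∅ = resTr s env 0 := by
      simp [hσ, List.getD_eq_getElem?_getD]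
    rcases hφ with hsafe | ⟨p, α, hpp, rfl⟩
    · rw [← htake]
      exact safety_take φ hsafe σ 1 0 (by omega) (by omega) hk
    · rcases hk with hall | ⟨m, _, _, hfls, _⟩
      · have hα0 : finSat σ α 0 := hall 0 le_rfl (by omega)
        have hα0' : finSat [resTr s env 0] α 0 := by
          refine purePast_congr α hpp σ [resTr s env 0] 0 (fun j hj => ?_) hα0
          interval_cases j
          simpa using hget0
        left
        intro j _ hj
        simp only [List.length_singleton] at hj
        interval_cases j
        exact hα0'
      · exact absurd hfls (fun h => h.2 h.1)
  · rintro ⟨s, hs⟩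
    refine ⟨s, fun env => ⟨0, ?_⟩⟩
    have : (List.range (0+1)).map (resTr s env) = [resTr s env 0] := by simp [show List.range 1 = [0] from rfl]
    rw [this]
    exact hs env
end

section
/- Let φ over Σ = C ∪ U be either a cosafetyLTL formula (a pure-future NNF formula whose only temporal operators are X and U) or a formula of the form F α with α pure past. Then φ is realizable over infinite traces if and only if φ is realizable over finite traces. -/
variable {A : Type}

section Aux
variable {A : Type}

lemma pre_len (σ : ℕ → Set A) (n : ℕ) : ((List.range n).map σ).length = n := by simp

lemma pre_getD (σ : ℕ → Set A) {n j : ℕ} (h : j < n) :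
    ((List.range n).map σ).getD j ∅ = σ j := by
  rw [List.getD_eq_getElem?_getD, List.getElem?_map, List.getElem?_range h]
  rfl

lemma cosafe_mono (σ : ℕ → Set A) (φ : LTLP A) :
    isCosafetyLTL φ → ∀ n m i, n ≤ m → i < n →
      finSat ((List.range n).map σ) φ i → finSat ((List.range m).map σ) φ i := by
  induction φ with
  | atom p =>
    intro _ n m i hnm hi hs
    simp only [finSat] at hs ⊢
    rwa [pre_getD σ (lt_of_lt_of_le hi hnm), ← pre_getD σ hi]
  | natom p =>
    intro _ n m i hnm hi hs
    simp only [finSat] at hs ⊢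
    rwa [pre_getD σ (lt_of_lt_of_le hi hnm), ← pre_getD σ hi]
  | and φ ψ ih1 ih2 =>
    intro h n m i hnm hi hs
    exact ⟨ih1 h.1 n m i hnm hi hs.1, ih2 h.2 n m i hnm hi hs.2⟩
  | or φ ψ ih1 ih2 =>
    intro h n m i hnm hi hs
    exact hs.elim (fun hs => Or.inl (ih1 h.1 n m i hnm hi hs))
      (fun hs => Or.inr (ih2 h.2 n m i hnm hi hs))
  | next φ ih =>
    intro h n m i hnm hi hs
    simp only [finSat, pre_len] at hs ⊢
    exact ⟨lt_of_lt_of_le hs.1 hnm, ih h n m (i+1) hnm hs.1 hs.2⟩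
  | until_ φ ψ ih1 ih2 =>
    intro h n m i hnm hi hs
    simp only [finSat, pre_len] at hs ⊢
    obtain ⟨j, hij, hjn, hψ, hall⟩ := hs
    exact ⟨j, hij, lt_of_lt_of_le hjn hnm, ih2 h.2 n m j hnm hjn hψ,
      fun k hik hkj => ih1 h.1 n m k hnm (lt_trans hkj hjn) (hall k hik hkj)⟩
  | wnext φ _ => exact fun h => h.elim
  | release φ ψ _ _ => exact fun h => h.elim
  | yest φ _ => exact fun h => h.elim
  | wyest φ _ => exact fun h => h.elim
  | since φ ψ _ _ => exact fun h => h.elim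
  | trig φ ψ _ _ => exact fun h => h.elim

lemma cosafe_fin_inf (σ : ℕ → Set A) (φ : LTLP A) :
    isCosafetyLTL φ → ∀ n i, i < n →
      finSat ((List.range n).map σ) φ i → infSat σ φ i := by
  induction φ with
  | atom p =>
    intro _ n i hi hs
    simp only [finSat] at hs
    rwa [pre_getD σ hi] at hs
  | natom p =>
    intro _ n i hi hs
    simp only [finSat] at hs
    rwa [pre_getD σ hi] at hs
  | and φ ψ ih1 ih2 =>
    intro h n i hi hs
    exact ⟨ih1 h.1 n i hi hs.1, ih2 h.2 n i hi hs.2⟩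
  | or φ ψ ih1 ih2 =>
    intro h n i hi hs
    exact hs.elim (fun hs => Or.inl (ih1 h.1 n i hi hs))
      (fun hs => Or.inr (ih2 h.2 n i hi hs))
  | next φ ih =>
    intro h n i hi hs
    simp only [finSat, pre_len] at hs
    exact ih h n (i+1) hs.1 hs.2
  | until_ φ ψ ih1 ih2 =>
    intro h n i hi hs
    simp only [finSat, pre_len] at hs
    obtain ⟨j, hij, hjn, hψ, hall⟩ := hs
    exact ⟨j, hij, ih2 h.2 n j hjn hψ,
      fun k hik hkj => ih1 h.1 n k (lt_trans hkj hjn) (hall k hik hkj)⟩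
  | wnext φ _ => exact fun h => h.elim
  | release φ ψ _ _ => exact fun h => h.elim
  | yest φ _ => exact fun h => h.elim
  | wyest φ _ => exact fun h => h.elim
  | since φ ψ _ _ => exact fun h => h.elim
  | trig φ ψ _ _ => exact fun h => h.elim

lemma cosafe_inf_fin (σ : ℕ → Set A) (φ : LTLP A) :
    isCosafetyLTL φ → ∀ i, infSat σ φ i →
      ∃ n, i < n ∧ finSat ((List.range n).map σ) φ i := by
  induction φ with
  | atom p =>
    intro _ i hs
    refine ⟨i+1, Nat.lt_succ_self i, ?_⟩
    simp only [finSat]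
    rwa [pre_getD σ (Nat.lt_succ_self i)]
  | natom p =>
    intro _ i hs
    refine ⟨i+1, Nat.lt_succ_self i, ?_⟩
    simp only [finSat]
    rwa [pre_getD σ (Nat.lt_succ_self i)]
  | and φ ψ ih1 ih2 =>
    intro h i hs
    obtain ⟨n1, hn1, h1⟩ := ih1 h.1 i hs.1
    obtain ⟨n2, hn2, h2⟩ := ih2 h.2 i hs.2
    exact ⟨max n1 n2, lt_of_lt_of_le hn1 (le_max_left _ _),
      cosafe_mono σ φ h.1 n1 _ i (le_max_left _ _) hn1 h1,
      cosafe_mono σ ψ h.2 n2 _ i (le_max_right _ _) hn2 h2⟩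
  | or φ ψ ih1 ih2 =>
    intro h i hs
    rcases hs with hs | hs
    · obtain ⟨n, hn, h1⟩ := ih1 h.1 i hs
      exact ⟨n, hn, Or.inl h1⟩
    · obtain ⟨n, hn, h1⟩ := ih2 h.2 i hs
      exact ⟨n, hn, Or.inr h1⟩
  | next φ ih =>
    intro h i hs
    obtain ⟨n, hn, h1⟩ := ih h (i+1) hs
    refine ⟨n, lt_trans (Nat.lt_succ_self i) hn, ?_⟩
    simp only [finSat, pre_len]
    exact ⟨hn, h1⟩
  | until_ φ ψ ih1 ih2 =>
    intro h i hs
    obtain ⟨j, hij, hψ, hall⟩ := hs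
    obtain ⟨nj, hnj, hj⟩ := ih2 h.2 j hψ
    have hch : ∀ k, ∃ n, k < n ∧
        ((i ≤ k ∧ k < j) → finSat ((List.range n).map σ) φ k) := by
      intro k
      by_cases hk : i ≤ k ∧ k < j
      · obtain ⟨n, hn, h1⟩ := ih1 h.1 k (hall k hk.1 hk.2)
        exact ⟨n, hn, fun _ => h1⟩
      · exact ⟨k+1, Nat.lt_succ_self k, fun hc => absurd hc hk⟩
    choose f hf1 hf2 using hch
    set N := max nj ((Finset.range j).sup f) with hN
    have hjN : nj ≤ N := le_max_left _ _
    refine ⟨N, lt_of_le_of_lt hij (lt_of_lt_of_le hnj hjN), ?_⟩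
    simp only [finSat, pre_len]
    refine ⟨j, hij, lt_of_lt_of_le hnj hjN,
      cosafe_mono σ ψ h.2 nj N j hjN hnj hj, fun k hik hkj => ?_⟩
    have hfk : f k ≤ N :=
      le_trans (Finset.le_sup (Finset.mem_range.mpr hkj)) (le_max_right _ _)
    exact cosafe_mono σ φ h.1 (f k) N k hfk (hf1 k) (hf2 k ⟨hik, hkj⟩)
  | wnext φ _ => exact fun h => h.elim
  | release φ ψ _ _ => exact fun h => h.elim
  | yest φ _ => exact fun h => h.elim
  | wyest φ _ => exact fun h => h.elim
  | since φ ψ _ _ => exact fun h => h.elim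
  | trig φ ψ _ _ => exact fun h => h.elim

lemma past_iff (σ : ℕ → Set A) (α : LTLP A) :
    purePast α → ∀ n i, i < n →
      (finSat ((List.range n).map σ) α i ↔ infSat σ α i) := by
  induction α with
  | atom p =>
    intro _ n i hi
    simp only [finSat, infSat, pre_getD σ hi]
  | natom p =>
    intro _ n i hi
    simp only [finSat, infSat, pre_getD σ hi]
  | and φ ψ ih1 ih2 =>
    intro h n i hi
    exact and_congr (ih1 h.1 n i hi) (ih2 h.2 n i hi)
  | or φ ψ ih1 ih2 =>
    intro h n i hi
    exact or_congr (ih1 h.1 n i hi) (ih2 h.2 n i hi)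
  | yest φ ih =>
    intro h n i hi
    exact and_congr Iff.rfl (ih h n (i-1) (lt_of_le_of_lt (Nat.sub_le i 1) hi))
  | wyest φ ih =>
    intro h n i hi
    exact or_congr Iff.rfl (ih h n (i-1) (lt_of_le_of_lt (Nat.sub_le i 1) hi))
  | since φ ψ ih1 ih2 =>
    intro h n i hi
    simp only [finSat, infSat]
    constructor
    · rintro ⟨j, hji, hψ, hall⟩
      exact ⟨j, hji, (ih2 h.2 n j (lt_of_le_of_lt hji hi)).mp hψ,
        fun k hjk hki => (ih1 h.1 n k (lt_of_le_of_lt hki hi)).mp (hall k hjk hki)⟩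
    · rintro ⟨j, hji, hψ, hall⟩
      exact ⟨j, hji, (ih2 h.2 n j (lt_of_le_of_lt hji hi)).mpr hψ,
        fun k hjk hki => (ih1 h.1 n k (lt_of_le_of_lt hki hi)).mpr (hall k hjk hki)⟩
  | trig φ ψ ih1 ih2 =>
    intro h n i hi
    simp only [finSat, infSat]
    constructor
    · rintro (hall | ⟨k, hki, hφ, hall⟩)
      · exact Or.inl fun j hji =>
          (ih2 h.2 n j (lt_of_le_of_lt hji hi)).mp (hall j hji)
      · exact Or.inr ⟨k, hki, (ih1 h.1 n k (lt_of_le_of_lt hki hi)).mp hφ,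
          fun j hkj hji => (ih2 h.2 n j (lt_of_le_of_lt hji hi)).mp (hall j hkj hji)⟩
    · rintro (hall | ⟨k, hki, hφ, hall⟩)
      · exact Or.inl fun j hji =>
          (ih2 h.2 n j (lt_of_le_of_lt hji hi)).mpr (hall j hji)
      · exact Or.inr ⟨k, hki, (ih1 h.1 n k (lt_of_le_of_lt hki hi)).mpr hφ,
          fun j hkj hji => (ih2 h.2 n j (lt_of_le_of_lt hji hi)).mpr (hall j hkj hji)⟩
  | next φ _ => exact fun h => h.elim
  | wnext φ _ => exact fun h => h.elim
  | until_ φ ψ _ _ => exact fun h => h.elim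
  | release φ ψ _ _ => exact fun h => h.elim

end Aux

/-- A cosafetyLTL formula, or `F α` with `α` pure past, over `Σ = C ∪ U`, is
realizable over infinite traces iff it is realizable over finite traces. -/
theorem stmt15 {C U : Type} [Fintype C] [Fintype U] (φ : LTLP (C ⊕ U))
    (hφ : isCosafetyLTL φ ∨
      ∃ (p : C ⊕ U) (α : LTLP (C ⊕ U)), purePast α ∧ φ = LTLP.F p α) :
    RealizableInf φ ↔ RealizableFin φ := by
  rcases hφ with h | ⟨p, α, hα, rfl⟩
  · constructor
    · rintro ⟨s, hs⟩
      refine ⟨s, fun env => ?_⟩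
      obtain ⟨n, hn, hfin⟩ := cosafe_inf_fin (resTr s env) φ h 0 (hs env)
      obtain ⟨k, rfl⟩ : ∃ k, n = k + 1 := ⟨n - 1, by omega⟩
      exact ⟨k, hfin⟩
    · rintro ⟨s, hs⟩
      refine ⟨s, fun env => ?_⟩
      obtain ⟨k, hk⟩ := hs env
      exact cosafe_fin_inf (resTr s env) φ h (k+1) 0 (Nat.succ_pos k) hk
  · constructor
    · rintro ⟨s, hs⟩
      refine ⟨s, fun env => ?_⟩
      obtain ⟨j, -, hj, -⟩ := hs env
      refine ⟨j, j, Nat.zero_le j, ?_, ?_, fun k _ _ => em _⟩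
      · simp [pre_len]
      · exact (past_iff (resTr s env) α hα (j+1) j (Nat.lt_succ_self j)).mpr hj
    · rintro ⟨s, hs⟩
      refine ⟨s, fun env => ?_⟩
      obtain ⟨k, hk⟩ := hs env
      obtain ⟨j, -, hjk, hj, -⟩ := hk
      rw [pre_len] at hjk
      exact ⟨j, Nat.zero_le j,
        (past_iff (resTr s env) α hα (k+1) j hjk).mp hj, fun k _ _ => em _⟩
end
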